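/- Let Γ be a tropical curve with a fixed model G = (V,E), let D be a divisor of nonnegative rank, and let P ∈ Γ. Let X be the set of points of the support of the P-reduced divisor D_P that lie in the interior of an edge of G. Then Γ∖X has at most two connected components; and if P ∉ X, then Γ∖X is connected. (Consequently the image of the reduced-divisor map lies in the 1-skeleton of the cell complex |D|.) -/

import Mathlib

open scoped Classical

/-- A combinatorial model of a metric graph: a finite multigraph with positive
edge lengths. -/
structure GraphModel where
  V : Type
  E : Type
  [fintV : Fintype V]
  [fintE : Fintype E]
  src : E → V
  tgt : E → V
  len : E → ℝ
  len_pos : ∀ e, 0 < len e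

attribute [instance] GraphModel.fintV GraphModel.fintE

/-- A (compact, connected) tropical curve: a compact connected metric space `Γ`
which is the geometric realization of a finite multigraph with positive edge
lengths, equipped with the induced path metric.  Each edge `e` is realized by a
parametrization `edge e : [0, len e] → Γ` joining its endpoints, injective on the
interior, the interiors of distinct edges are disjoint and avoid the vertices,
the edges and vertices cover `Γ`, and the metric is the associated path metric. -/
structure TropicalCurve where
  Γ : Type
  [met : MetricSpace Γ]
  [cpt : CompactSpace Γ]
  [conn : ConnectedSpace Γ]
  G : GraphModel
  vtx : G.V → Γ
  edge : G.E → ℝ → Γ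
  vtx_inj : Function.Injective vtx
  edge_src : ∀ e, edge e 0 = vtx (G.src e)
  edge_tgt : ∀ e, edge e (G.len e) = vtx (G.tgt e)
  edge_inj : ∀ e, Set.InjOn (edge e) (Set.Ioo 0 (G.len e))
  interior_disjoint : ∀ e e' t t', t ∈ Set.Ioo 0 (G.len e) → t' ∈ Set.Ioo 0 (G.len e') →
    edge e t = edge e' t' → e = e' ∧ t = t'
  interior_not_vtx : ∀ e t v, t ∈ Set.Ioo 0 (G.len e) → edge e t ≠ vtx v
  cover : ∀ x : Γ, (∃ v, x = vtx v) ∨ ∃ e t, t ∈ Set.Ioo 0 (G.len e) ∧ x = edge e t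
  path_metric : ∀ x y : Γ, dist x y = sInf { d : ℝ | ∃ (n : ℕ) (p : ℕ → Γ) (δ : ℕ → ℝ),
    p 0 = x ∧ p n = y ∧ (∀ i < n, ∃ (e : G.E) (s t : ℝ), s ∈ Set.Icc 0 (G.len e) ∧
      t ∈ Set.Icc 0 (G.len e) ∧ p i = edge e s ∧ p (i+1) = edge e t ∧ δ i = |s - t|) ∧
    d = ∑ i ∈ Finset.range n, δ i }

attribute [instance] TropicalCurve.met TropicalCurve.cpt TropicalCurve.conn

namespace TropicalCurve

variable (C : TropicalCurve)

/-- A divisor on a tropical curve: a finitely supported function `Γ → ℤ`. -/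
abbrev Divisor := C.Γ →₀ ℤ

/-- A divisor is effective if all its coefficients are nonnegative. -/
def Effective (D : Divisor C) : Prop := ∀ v, 0 ≤ D v

/-- The degree of a divisor: the sum of its coefficients. -/
def deg (D : Divisor C) : ℤ := D.sum fun _ n => n

/-- `f` has (outgoing) slope `m` to the right of the point with parameter `t₀`
on the edge `e`. -/
def HasSlopeR (f : C.Γ → ℝ) (e : C.G.E) (t₀ : ℝ) (m : ℤ) : Prop :=
  ∃ ε > 0, t₀ + ε ≤ C.G.len e ∧ ∀ s ∈ Set.Icc t₀ (t₀ + ε),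
    f (C.edge e s) = f (C.edge e t₀) + m * (s - t₀)

/-- `f` has (outgoing) slope `m` to the left of the point with parameter `t₀`
on the edge `e`. -/
def HasSlopeL (f : C.Γ → ℝ) (e : C.G.E) (t₀ : ℝ) (m : ℤ) : Prop :=
  ∃ ε > 0, 0 ≤ t₀ - ε ∧ ∀ s ∈ Set.Icc (t₀ - ε) t₀,
    f (C.edge e s) = f (C.edge e t₀) + m * (t₀ - s)

/-- The branches (outgoing directions) at a point `x` of a tropical curve.  A
branch is encoded by an edge `e`, a parameter `t` with `edge e t = x`, and a
Boolean : `true` for the rightward direction, `false` for the leftward one. -/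
def IsBranchAt (b : C.G.E × ℝ × Bool) (x : C.Γ) : Prop :=
  C.edge b.1 b.2.1 = x ∧ b.2.1 ∈ Set.Icc 0 (C.G.len b.1) ∧
    (if b.2.2 then b.2.1 < C.G.len b.1 else 0 < b.2.1)

/-- `ord_f(x) = n` : the sum of the outgoing slopes of `f` over all branches
emanating from `x` equals `n`. -/
def HasOrderAt (f : C.Γ → ℝ) (x : C.Γ) (n : ℤ) : Prop :=
  ∃ (S : Finset (C.G.E × ℝ × Bool)) (m : C.G.E × ℝ × Bool → ℤ),
    (∀ b, b ∈ S ↔ C.IsBranchAt b x) ∧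
    (∀ b ∈ S, if b.2.2 then C.HasSlopeR f b.1 b.2.1 (m b)
      else C.HasSlopeL f b.1 b.2.1 (m b)) ∧
    n = ∑ b ∈ S, m b

/-- A rational function on a tropical curve: a continuous function which is
piecewise linear with integer slopes and finitely many linear pieces on every
edge. -/
def IsRational (f : C.Γ → ℝ) : Prop :=
  Continuous f ∧ ∀ e : C.G.E, ∃ (n : ℕ) (t : ℕ → ℝ), 0 < n ∧ t 0 = 0 ∧ t n = C.G.len e ∧
    (∀ i < n, t i < t (i+1)) ∧
    ∀ i < n, ∃ (m : ℤ) (b : ℝ), ∀ s ∈ Set.Icc (t i) (t (i+1)),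
      f (C.edge e s) = m * s + b

/-- Two divisors are linearly equivalent if their difference is the divisor of a
rational function: `D - D' = div(f)`. -/
def LinEquiv (D D' : Divisor C) : Prop :=
  ∃ f : C.Γ → ℝ, C.IsRational f ∧ ∀ x, C.HasOrderAt f x (D x - D' x)

/-- `f ∈ R(D)` : `f` is a rational function with `D + div(f) ≥ 0`. -/
def InR (D : Divisor C) (f : C.Γ → ℝ) : Prop :=
  C.IsRational f ∧ ∃ E : Divisor C, C.Effective E ∧ ∀ x, C.HasOrderAt f x (E x - D x)

/-- The branch `b` at `v` leaves the set `X`: some initial punctured segment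
along `b` stays in `Γ ∖ (X ∖ {v})`. -/
def BranchLeaving (X : Set C.Γ) (v : C.Γ) (b : C.G.E × ℝ × Bool) : Prop :=
  C.IsBranchAt b v ∧
    (if b.2.2 then ∃ ε > 0, b.2.1 + ε ≤ C.G.len b.1 ∧
        ∀ s ∈ Set.Ioc b.2.1 (b.2.1 + ε), C.edge b.1 s ∈ X → C.edge b.1 s = v
      else ∃ ε > 0, 0 ≤ b.2.1 - ε ∧
        ∀ s ∈ Set.Ico (b.2.1 - ε) b.2.1, C.edge b.1 s ∈ X → C.edge b.1 s = v)

/-- `deg_X^out(v)` : the number of edges (branch directions) leaving `X` at `v`,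
i.e. the maximal number of internally disjoint segments in `Γ ∖ (X ∖ {v})` with
an end at `v`. -/
noncomputable def outDeg (X : Set C.Γ) (v : C.Γ) : ℕ :=
  {b | C.BranchLeaving X v b}.ncard

/-- The degree (valence) of a point: the number of branches of `Γ` at `v`. -/
noncomputable def pointDeg (v : C.Γ) : ℕ := C.outDeg {v} v

/-- `D` is `v₀`-reduced: its coefficients away from `v₀` are nonnegative, and
every closed connected subset `X ⊆ Γ` avoiding `v₀` has a non-saturated boundary
point, i.e. some `v ∈ ∂X` with `D(v) < deg_X^out(v)`. -/
def IsReduced (v₀ : C.Γ) (D : Divisor C) : Prop :=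
  (∀ v, v ≠ v₀ → 0 ≤ D v) ∧
  ∀ X : Set C.Γ, IsClosed X → IsConnected X → v₀ ∉ X →
    ∃ v ∈ frontier X, D v < (C.outDeg X v : ℤ)

/-- `D` is linearly equivalent to an effective divisor. -/
def EquivEffective (D : Divisor C) : Prop :=
  ∃ E : Divisor C, C.Effective E ∧ C.LinEquiv D E

/-- The rank of a divisor: the largest `r ≥ -1` such that for every effective
divisor `E` of degree `r`, `D - E` is linearly equivalent to an effective
divisor (`-1` when `D` itself is not equivalent to an effective divisor). -/
noncomputable def rank (D : Divisor C) : ℤ :=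
  sSup {r : ℤ | -1 ≤ r ∧ ∀ E : Divisor C, C.Effective E → C.deg E = r →
    C.EquivEffective (D - E)}

/-- The genus of a tropical curve: its first Betti number, computed from any
model as `#E - #V + 1`. -/
noncomputable def genus : ℤ :=
  (Fintype.card C.G.E : ℤ) - (Fintype.card C.G.V : ℤ) + 1

/-- `D` is very ample: the rational functions in `R(D)` separate the points
of `Γ`. -/
def VeryAmple (D : Divisor C) : Prop :=
  ∀ P Q : C.Γ, P ≠ Q → ∃ f g : C.Γ → ℝ, C.InR D f ∧ C.InR D g ∧ f P - g P ≠ f Q - g Q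

/-- `D` is ample: some positive integer multiple of `D` is very ample. -/
def Ample (D : Divisor C) : Prop := ∃ m : ℕ, 0 < m ∧ C.VeryAmple (m • D)

end TropicalCurve

/-- The set of points of the support of a divisor which lie in the interior of
an edge of the (fixed) model of `Γ`. -/
def TropicalCurve.interiorSupport (C : TropicalCurve) (E : TropicalCurve.Divisor C) :
    Set C.Γ :=
  {x | E x ≠ 0 ∧ ∃ (e : C.G.E) (t : ℝ), t ∈ Set.Ioo 0 (C.G.len e) ∧ x = C.edge e t}

/-!
The interior support `X` of `D_P` is finite and `Γ` is locally connected, so the components of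
`Γ ∖ X` are open. Reducedness puts `P` in the closure of every component `Y`: otherwise the
closure of `Y` is closed, connected and avoids `P`, so it has a boundary point `v` with
`D_P(v) < deg_out(v)`. Such a `v` lies in `X`, in the interior of an edge, so `D_P(v) ≥ 1`
forces both branches at `v` to leave the closure, which isolates `v` from `Y`. If `P ∉ X`, this
puts `P` in every component; if `P ∈ X`, every component meets one of the two half-edges at `P`.
-/

theorem mem_connectedComponentIn_of_mem_closure {α : Type*} [TopologicalSpace α]
    [LocallyConnectedSpace α] {U : Set α} (hU : IsOpen U) {y z : α}
    (hz : z ∈ closure (connectedComponentIn U y)) (hzU : z ∈ U) :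
    z ∈ connectedComponentIn U y := by
  obtain ⟨u, huz, huy⟩ := mem_closure_iff_nhds.1 hz _
    (hU.connectedComponentIn.mem_nhds (mem_connectedComponentIn hzU))
  rw [connectedComponentIn_eq huy, ← connectedComponentIn_eq huz]
  exact mem_connectedComponentIn hzU

namespace TropicalCurve

open Set Filter Topology

variable {C : TropicalCurve}

lemma dist_edge_le (e : C.G.E) {s t : ℝ} (hs : s ∈ Icc 0 (C.G.len e))
    (ht : t ∈ Icc 0 (C.G.len e)) :
    dist (C.edge e s) (C.edge e t) ≤ |s - t| := by
  rw [C.path_metric]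
  apply csInf_le
  · refine ⟨0, fun d ⟨_, _, _, _, _, hstep, hd⟩ => hd ▸ Finset.sum_nonneg fun i hi => ?_⟩
    obtain ⟨_, _, _, _, _, _, _, hδ⟩ := hstep i (Finset.mem_range.1 hi)
    exact hδ ▸ abs_nonneg _
  · refine ⟨1, fun i => if i = 0 then C.edge e s else C.edge e t, fun _ => |s - t|,
      by simp, by simp, fun i hi => ?_, by simp⟩
    obtain rfl : i = 0 := Nat.lt_one_iff.1 hi
    exact ⟨e, s, t, hs, ht, by simp, by simp, rfl⟩

lemma continuousOn_edge (e : C.G.E) : ContinuousOn (C.edge e) (Icc 0 (C.G.len e)) := by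
  refine (LipschitzOnWith.of_dist_le_mul (K := 1) fun s hs t ht => ?_).continuousOn
  simpa [Real.dist_eq] using dist_edge_le e hs ht

lemma eq_of_edge_eq_edge_of_mem_Ioo {e e' : C.G.E} {t t' : ℝ} (ht' : t' ∈ Icc 0 (C.G.len e'))
    (ht : t ∈ Ioo 0 (C.G.len e)) (h : C.edge e' t' = C.edge e t) : e' = e ∧ t' = t := by
  refine C.interior_disjoint e' e t' t ⟨ht'.1.lt_of_ne ?_, ht'.2.lt_of_ne ?_⟩ ht h
  · rintro rfl
    exact C.interior_not_vtx e t _ ht (h.symm.trans (C.edge_src e'))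
  · rintro rfl
    exact C.interior_not_vtx e t _ ht (h.symm.trans (C.edge_tgt e'))

variable (C) in
def star (x : C.Γ) (r : ℝ) : Set C.Γ :=
  {y | y = x ∨ ∃ e, ∃ t ∈ Icc 0 (C.G.len e), C.edge e t = x ∧
    ∃ s ∈ Icc 0 (C.G.len e) ∩ Metric.ball t r, C.edge e s = y}

lemma isPreconnected_star (x : C.Γ) (r : ℝ) : IsPreconnected (C.star x r) := by
  refine isPreconnected_of_forall x fun y hy => ?_
  rcases hy with rfl | ⟨e, t, ht, rfl, s, hs, rfl⟩
  · exact ⟨{y}, by simp [star], rfl, rfl, isPreconnected_singleton⟩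
  refine ⟨C.edge e '' (Icc 0 (C.G.len e) ∩ Metric.ball t r), ?_,
    ⟨t, ⟨ht, Metric.mem_ball_self (Metric.nonempty_ball.1 ⟨s, hs.2⟩)⟩, rfl⟩,
    mem_image_of_mem _ hs, ?_⟩
  · rintro _ ⟨s', hs', rfl⟩
    exact Or.inr ⟨e, t, ht, rfl, s', hs', rfl⟩
  · exact (convex_Icc _ _).inter (convex_ball t r) |>.isPreconnected.image _
      ((continuousOn_edge e).mono inter_subset_left)

lemma star_subset_ball {r : ℝ} (hr : 0 < r) (x : C.Γ) : C.star x r ⊆ Metric.ball x r := by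
  rintro y (rfl | ⟨e, t, ht, rfl, s, hs, rfl⟩)
  · exact Metric.mem_ball_self hr
  · exact (dist_edge_le e hs.1 ht).trans_lt (by simpa [Real.dist_eq] using hs.2)

/-- The points at parameter distance at least `r` from `x` on every edge form a compact set
avoiding `x`, and everything outside it lies in the star. -/
lemma star_mem_nhds {r : ℝ} (hr : 0 < r) (x : C.Γ) : C.star x r ∈ 𝓝 x := by
  let far (e : C.G.E) : Set ℝ := Icc 0 (C.G.len e) ∩
    ⋂ t ∈ {t | t ∈ Icc 0 (C.G.len e) ∧ C.edge e t = x}, {s | r ≤ dist s t}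
  let F := (⋃ e, C.edge e '' far e) ∪ C.vtx '' {v | C.vtx v ≠ x}
  have hF : IsClosed F := by
    refine IsCompact.isClosed ((isCompact_iUnion fun e => ?_).union (toFinite _).isCompact)
    refine (isCompact_Icc.inter_right (isClosed_biInter fun t _ => ?_)).image_of_continuousOn
      ((continuousOn_edge e).mono inter_subset_left)
    exact isClosed_le continuous_const (continuous_id.dist continuous_const)
  have hxF : x ∉ F := by
    rintro (hx | ⟨v, hv, rfl⟩)
    · obtain ⟨e, s, hs, hsx⟩ := mem_iUnion.1 hx
      have := mem_iInter₂.1 hs.2 s ⟨hs.1, hsx⟩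
      rw [mem_ofPred_eq, dist_self] at this
      linarith
    · exact hv rfl
  refine mem_of_superset (hF.isOpen_compl.mem_nhds hxF) fun y hy => ?_
  rcases C.cover y with ⟨v, rfl⟩ | ⟨e, s, hs, rfl⟩
  · by_contra hvx
    exact hy (Or.inr ⟨v, fun h => hvx (Or.inl h), rfl⟩)
  · have : s ∉ far e := fun h => hy (Or.inl (mem_iUnion.2 ⟨e, s, h, rfl⟩))
    simp only [far, mem_inter_iff, mem_iInter₂, not_and, not_forall] at this
    obtain ⟨t, ⟨ht, hte⟩, hst⟩ := this (Ioo_subset_Icc_self hs)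
    exact Or.inr ⟨e, t, ht, hte, s,
      ⟨Ioo_subset_Icc_self hs, Metric.mem_ball.2 (not_le.1 hst)⟩, rfl⟩

instance : LocallyConnectedSpace C.Γ := by
  refine locallyConnectedSpace_iff_connected_subsets.2 fun x U hU => ?_
  obtain ⟨r, hr, hball⟩ := Metric.mem_nhds_iff.1 hU
  exact ⟨C.star x r, star_mem_nhds hr x, isPreconnected_star x r,
    (star_subset_ball hr x).trans hball⟩

lemma exists_mem_Icc_of_mem_star_edge {e : C.G.E} {t₀ r : ℝ} (hr : 0 < r)
    (ht₀ : t₀ ∈ Ioo 0 (C.G.len e)) {y : C.Γ} (hy : y ∈ C.star (C.edge e t₀) r) :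
    ∃ s ∈ Icc 0 (C.G.len e), |s - t₀| < r ∧ C.edge e s = y := by
  rcases hy with rfl | ⟨e', t, ht, hte, s, hs, rfl⟩
  · exact ⟨t₀, Ioo_subset_Icc_self ht₀, by simpa using hr, rfl⟩
  obtain ⟨rfl, rfl⟩ := eq_of_edge_eq_edge_of_mem_Ioo ht ht₀ hte
  exact ⟨s, hs.1, by simpa [Real.dist_eq] using hs.2, rfl⟩

lemma isBranchAt_edge_of_mem_Ioo {e : C.G.E} {t₀ : ℝ} (ht₀ : t₀ ∈ Ioo 0 (C.G.len e))
    {b : C.G.E × ℝ × Bool} (hb : C.IsBranchAt b (C.edge e t₀)) :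
    b = (e, t₀, true) ∨ b = (e, t₀, false) := by
  obtain ⟨e', t, d⟩ := b
  obtain ⟨rfl, rfl⟩ := eq_of_edge_eq_edge_of_mem_Ioo hb.2.1 ht₀ hb.1
  cases d <;> simp

lemma branchLeaving_of_two_le_outDeg {X : Set C.Γ} {e : C.G.E} {t₀ : ℝ}
    (ht₀ : t₀ ∈ Ioo 0 (C.G.len e)) (h : 2 ≤ C.outDeg X (C.edge e t₀)) :
    C.BranchLeaving X (C.edge e t₀) (e, t₀, true) ∧
      C.BranchLeaving X (C.edge e t₀) (e, t₀, false) := by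
  have hsub : {b | C.BranchLeaving X (C.edge e t₀) b} ⊆ {(e, t₀, true), (e, t₀, false)} :=
    fun b hb => isBranchAt_edge_of_mem_Ioo ht₀ hb.1
  have heq := Set.ext_iff.1 <| eq_of_subset_of_ncard_le hsub
    ((ncard_pair (by simp)).trans_le h) (toFinite _)
  exact ⟨(heq _).2 (by simp), (heq _).2 (by simp)⟩

lemma notMem_closure_diff_of_branchLeaving {S : Set C.Γ} {e : C.G.E} {t₀ : ℝ}
    (ht₀ : t₀ ∈ Ioo 0 (C.G.len e))
    (hR : C.BranchLeaving S (C.edge e t₀) (e, t₀, true))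
    (hL : C.BranchLeaving S (C.edge e t₀) (e, t₀, false)) :
    C.edge e t₀ ∉ closure (S \ {C.edge e t₀}) := by
  obtain ⟨-, ε₁, hε₁, -, hright⟩ := hR
  obtain ⟨-, ε₂, hε₂, -, hleft⟩ := hL
  have hε := lt_min hε₁ hε₂
  intro hcl
  obtain ⟨y, hy, hyS, hyne⟩ := mem_closure_iff_nhds.1 hcl _ (star_mem_nhds hε _)
  obtain ⟨s, -, hs, rfl⟩ := exists_mem_Icc_of_mem_star_edge hε ht₀ hy
  have hs₁ := abs_lt.1 (hs.trans_le (min_le_left _ _))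
  have hs₂ := abs_lt.1 (hs.trans_le (min_le_right _ _))
  rcases lt_trichotomy s t₀ with hst | rfl | hst
  · exact hyne (hleft s ⟨by linarith, hst⟩ hyS)
  · exact hyne rfl
  · exact hyne (hright s ⟨hst, by linarith⟩ hyS)

lemma finite_interiorSupport (D : Divisor C) : (C.interiorSupport D).Finite :=
  D.support.finite_toSet.subset fun _ hx => Finsupp.mem_support_iff.2 hx.1

lemma mem_closure_connectedComponentIn_of_isReduced {P : C.Γ} {D : Divisor C}
    (hD : C.IsReduced P D) {y : C.Γ} (hy : y ∉ C.interiorSupport D) :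
    P ∈ closure (connectedComponentIn (C.interiorSupport D)ᶜ y) := by
  set X := C.interiorSupport D
  set Y := connectedComponentIn Xᶜ y
  have hXo : IsOpen Xᶜ := (finite_interiorSupport D).isClosed.isOpen_compl
  by_contra hP
  obtain ⟨v, hv, hlt⟩ := hD.2 (closure Y) isClosed_closure
    (isConnected_connectedComponentIn_iff.2 hy).closure hP
  have hvcl : v ∈ closure Y := isClosed_closure.frontier_subset hv
  have hvY : v ∉ Y := fun h =>
    hv.2 (interior_mono subset_closure (hXo.connectedComponentIn.interior_eq.symm ▸ h))
  obtain ⟨hne, e, t₀, ht₀, rfl⟩ : v ∈ X := by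
    by_contra hvX
    exact hvY (mem_connectedComponentIn_of_mem_closure hXo hvcl hvX)
  have h2 : 2 ≤ C.outDeg (closure Y) (C.edge e t₀) := by
    have := hD.1 _ fun h => hP (h ▸ hvcl)
    omega
  obtain ⟨hR, hL⟩ := branchLeaving_of_two_le_outDeg ht₀ h2
  refine notMem_closure_diff_of_branchLeaving ht₀ hR hL (closure_mono ?_ hvcl)
  exact fun z hz => ⟨subset_closure hz, fun h => hvY (h ▸ hz)⟩

lemma connectedComponentIn_edge_eq {U : Set C.Γ} {e : C.G.E} {I : Set ℝ}
    (hI : IsPreconnected I) (hIe : I ⊆ Icc 0 (C.G.len e)) (hIU : C.edge e '' I ⊆ U)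
    {s s' : ℝ} (hs : s ∈ I) (hs' : s' ∈ I) :
    connectedComponentIn U (C.edge e s) = connectedComponentIn U (C.edge e s') :=
  connectedComponentIn_eq <|
    (hI.image _ ((continuousOn_edge e).mono hIe)).subset_connectedComponentIn
      (mem_image_of_mem _ hs) hIU (mem_image_of_mem _ hs')

lemma exists_pos_forall_edge_mem_of_finite {X : Set C.Γ} (hX : X.Finite) {e : C.G.E}
    {t₀ : ℝ} (ht₀ : t₀ ∈ Ioo 0 (C.G.len e)) :
    ∃ ρ > 0, ρ ≤ t₀ ∧ ρ ≤ C.G.len e - t₀ ∧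
      ∀ s, |s - t₀| < ρ → C.edge e s ∈ X → s = t₀ := by
  obtain ⟨r, hr, hball⟩ := Metric.isOpen_iff.1
    (hX.sdiff (t := {C.edge e t₀})).isClosed.isOpen_compl (C.edge e t₀) fun h => h.2 rfl
  refine ⟨min r (min t₀ (C.G.len e - t₀)), lt_min hr (lt_min ht₀.1 (sub_pos.2 ht₀.2)),
    (min_le_right _ _).trans (min_le_left _ _), (min_le_right _ _).trans (min_le_right _ _),
    fun s hs hsX => ?_⟩
  have hs' := abs_lt.1 hs
  have hsI : s ∈ Ioo 0 (C.G.len e) := by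
    constructor <;> linarith [min_le_right r (min t₀ (C.G.len e - t₀)),
      min_le_left t₀ (C.G.len e - t₀), min_le_right t₀ (C.G.len e - t₀)]
  by_contra hst
  refine hball ?_ ⟨hsX, fun h => hst (C.edge_inj e hsI ht₀ h)⟩
  exact (dist_edge_le e (Ioo_subset_Icc_self hsI) (Ioo_subset_Icc_self ht₀)).trans_lt
    (hs.trans_le (min_le_left _ _))

lemma exists_pos_forall_connectedComponentIn_edge_eq_or_eq {X : Set C.Γ} (hX : X.Finite)
    {e : C.G.E} {t₀ : ℝ} (ht₀ : t₀ ∈ Ioo 0 (C.G.len e)) :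
    ∃ ρ > 0, ∀ s, |s - t₀| < ρ → s ≠ t₀ →
      connectedComponentIn Xᶜ (C.edge e s) =
          connectedComponentIn Xᶜ (C.edge e (t₀ - ρ / 2)) ∨
        connectedComponentIn Xᶜ (C.edge e s) =
          connectedComponentIn Xᶜ (C.edge e (t₀ + ρ / 2)) := by
  obtain ⟨ρ, hρ, hρt, hρl, hρX⟩ := exists_pos_forall_edge_mem_of_finite hX ht₀
  have half : ∀ a b, t₀ - ρ ≤ a → b ≤ t₀ + ρ → t₀ ∉ Ioo a b →
      ∀ s ∈ Ioo a b, ∀ s' ∈ Ioo a b,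
        connectedComponentIn Xᶜ (C.edge e s) = connectedComponentIn Xᶜ (C.edge e s') := by
    intro a b ha hb ht₀ab s hs s' hs'
    refine connectedComponentIn_edge_eq isPreconnected_Ioo
      (fun u hu => ⟨by linarith [hu.1], by linarith [hu.2]⟩) ?_ hs hs'
    rintro _ ⟨u, hu, rfl⟩ huX
    exact ht₀ab (hρX u (abs_lt.2 ⟨by linarith [hu.1], by linarith [hu.2]⟩) huX ▸ hu)
  refine ⟨ρ, hρ, fun s hs hst => ?_⟩
  have hs' := abs_lt.1 hs
  rcases hst.lt_or_gt with h | h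
  · exact Or.inl (half (t₀ - ρ) t₀ le_rfl (by linarith) (fun h => h.2.false)
      s ⟨by linarith, h⟩ _ ⟨by linarith, by linarith⟩)
  · exact Or.inr (half t₀ (t₀ + ρ) (by linarith) le_rfl (fun h => h.1.false)
      s ⟨h, by linarith⟩ _ ⟨by linarith, by linarith⟩)

lemma connectedComponentIn_eq_of_isReduced_of_notMem {P : C.Γ} {D : Divisor C}
    (hD : C.IsReduced P D) (hP : P ∉ C.interiorSupport D) {w : C.Γ}
    (hw : w ∉ C.interiorSupport D) :
    connectedComponentIn (C.interiorSupport D)ᶜ w =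
      connectedComponentIn (C.interiorSupport D)ᶜ P :=
  connectedComponentIn_eq <| mem_connectedComponentIn_of_mem_closure
    (finite_interiorSupport D).isClosed.isOpen_compl
    (mem_closure_connectedComponentIn_of_isReduced hD hw) hP

lemma exists_forall_connectedComponentIn_eq_or_eq {P : C.Γ} {D : Divisor C}
    (hD : C.IsReduced P D) :
    ∃ a b : C.Γ, ∀ w ∉ C.interiorSupport D,
      connectedComponentIn (C.interiorSupport D)ᶜ w =
          connectedComponentIn (C.interiorSupport D)ᶜ a ∨
        connectedComponentIn (C.interiorSupport D)ᶜ w =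
          connectedComponentIn (C.interiorSupport D)ᶜ b := by
  by_cases hP : P ∈ C.interiorSupport D
  swap
  · exact ⟨P, P, fun w hw => Or.inl (connectedComponentIn_eq_of_isReduced_of_notMem hD hP hw)⟩
  obtain ⟨e, t₀, ht₀, rfl⟩ := hP.2
  obtain ⟨ρ, hρ, hρcc⟩ :=
    exists_pos_forall_connectedComponentIn_edge_eq_or_eq (finite_interiorSupport D) ht₀
  refine ⟨C.edge e (t₀ - ρ / 2), C.edge e (t₀ + ρ / 2), fun w hw => ?_⟩
  obtain ⟨u, hu, huw⟩ := mem_closure_iff_nhds.1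
    (mem_closure_connectedComponentIn_of_isReduced hD hw) _ (star_mem_nhds hρ _)
  obtain ⟨s, -, hs, rfl⟩ := exists_mem_Icc_of_mem_star_edge hρ ht₀ hu
  rw [connectedComponentIn_eq huw]
  exact hρcc s hs fun hst => connectedComponentIn_subset _ _ huw (hst ▸ hP)

end TropicalCurve

theorem complement_of_interior_support_of_reduced_general (C : TropicalCurve)
    (P : C.Γ)
    (DP : TropicalCurve.Divisor C) (h₁ : C.IsReduced P DP) :
    (∀ x y z : C.Γ,
      x ∈ (C.interiorSupport DP)ᶜ → y ∈ (C.interiorSupport DP)ᶜ →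
      z ∈ (C.interiorSupport DP)ᶜ →
      (connectedComponentIn (C.interiorSupport DP)ᶜ x =
        connectedComponentIn (C.interiorSupport DP)ᶜ y ∨
       connectedComponentIn (C.interiorSupport DP)ᶜ x =
        connectedComponentIn (C.interiorSupport DP)ᶜ z ∨
       connectedComponentIn (C.interiorSupport DP)ᶜ y =
        connectedComponentIn (C.interiorSupport DP)ᶜ z)) ∧
    (P ∉ C.interiorSupport DP → IsConnected (C.interiorSupport DP)ᶜ) := by
  obtain ⟨a, b, hab⟩ := TropicalCurve.exists_forall_connectedComponentIn_eq_or_eq h₁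
  refine ⟨fun x y z hx hy hz => ?_, fun hP => ?_⟩
  · rcases hab x hx with hx | hx <;> rcases hab y hy with hy | hy <;>
      rcases hab z hz with hz | hz <;> simp only [hx, hy, hz, true_or, or_true]
  · have hcc : connectedComponentIn (C.interiorSupport DP)ᶜ P = (C.interiorSupport DP)ᶜ :=
      (connectedComponentIn_subset _ _).antisymm fun y hy =>
        TropicalCurve.connectedComponentIn_eq_of_isReduced_of_notMem h₁ hP hy ▸
          mem_connectedComponentIn hy
    exact hcc ▸ isConnected_connectedComponentIn_iff.2 hP

/-- Let `Γ` be a tropical curve with a fixed model `G = (V,E)`,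
let `D` be a divisor of nonnegative rank, and let `P ∈ Γ`. Let `X` be the set of
points of the support of the `P`-reduced divisor `D_P` that lie in the interior
of an edge of `G`. Then `Γ ∖ X` has at most two connected components; and if
`P ∉ X`, then `Γ ∖ X` is connected. -/
theorem complement_of_interior_support_of_reduced (C : TropicalCurve)
    (D : TropicalCurve.Divisor C) (hD : 0 ≤ C.rank D) (P : C.Γ)
    (DP : TropicalCurve.Divisor C) (h₁ : C.IsReduced P DP) (h₂ : C.LinEquiv DP D) :
    (∀ x y z : C.Γ,
      x ∈ (C.interiorSupport DP)ᶜ → y ∈ (C.interiorSupport DP)ᶜ →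
      z ∈ (C.interiorSupport DP)ᶜ →
      (connectedComponentIn (C.interiorSupport DP)ᶜ x =
        connectedComponentIn (C.interiorSupport DP)ᶜ y ∨
       connectedComponentIn (C.interiorSupport DP)ᶜ x =
        connectedComponentIn (C.interiorSupport DP)ᶜ z ∨
       connectedComponentIn (C.interiorSupport DP)ᶜ y =
        connectedComponentIn (C.interiorSupport DP)ᶜ z)) ∧
    (P ∉ C.interiorSupport DP → IsConnected (C.interiorSupport DP)ᶜ) :=
  complement_of_interior_support_of_reduced_general C P DP h₁
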